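/- In the IS-hardness reduction game for BB-hedonic games: for any clause X, within the gadget consisting of players 1^X, 2^X, 3^X, 4^X, 5^X (with preferences i^X: most prefers (i+1)^X, then (i−1)^X, indices mod 5, all other gadget players unacceptable), if 1^X is a singleton in a partition π and all of 2^X,3^X,4^X,5^X lie in coalitions among {2^X,3^X}, {3^X,4^X}, {4^X,5^X} or singletons, then π is not individually stable. -/

import Mathlib

open Finset

/-- A partition of the player set into coalitions: `part i` is the coalition
containing player `i`. -/
structure HPartition (N : Type*) where
  part : N → Finset N
  mem_self : ∀ i, i ∈ part i
  eq_of_mem : ∀ i j : N, j ∈ part i → part j = part i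

section Defs

variable {N : Type*} [DecidableEq N]

/-- Strict part of a weak preference over coalitions. -/
def SPref (pref : N → Finset N → Finset N → Prop) (i : N) (S T : Finset N) : Prop :=
  pref i S T ∧ ¬ pref i T S

/-- `S` is an (existing or empty) coalition of the partition `π`. -/
def IsCoalitionOf (π : HPartition N) (S : Finset N) : Prop :=
  S = ∅ ∨ ∃ j, S = π.part j

/-- Nash stability: no player strictly prefers joining another existing
(possibly empty) coalition. -/
def NashStable (pref : N → Finset N → Finset N → Prop) (π : HPartition N) : Prop :=
  ∀ i S, IsCoalitionOf π S → S ≠ π.part i →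
    ¬ SPref pref i (insert i S) (π.part i)

/-- Individual stability: no strictly improving move that all members of the
joined coalition weakly approve. -/
def IndStable (pref : N → Finset N → Finset N → Prop) (π : HPartition N) : Prop :=
  ∀ i S, IsCoalitionOf π S → S ≠ π.part i →
    ¬ (SPref pref i (insert i S) (π.part i) ∧ ∀ j ∈ S, pref j (insert i S) S)

/-- Contractual individual stability: no strictly improving move approved by the
joined coalition and by the abandoned coalition. -/
def ContIndStable (pref : N → Finset N → Finset N → Prop) (π : HPartition N) : Prop :=
  ∀ i S, IsCoalitionOf π S → S ≠ π.part i →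
    ¬ (SPref pref i (insert i S) (π.part i) ∧ (∀ j ∈ S, pref j (insert i S) S) ∧
        (∀ j ∈ π.part i, j ≠ i → pref j ((π.part i).erase i) (π.part i)))

/-- Individual rationality: everyone weakly prefers his coalition to being alone. -/
def IndRational (pref : N → Finset N → Finset N → Prop) (π : HPartition N) : Prop :=
  ∀ i, pref i (π.part i) {i}

/-- A CIS deviation from `π` to `π'`: player `i` moves to the (possibly empty)
existing coalition `T`, strictly improving, while no member of `T` nor of the
abandoned coalition is worse off. -/
def CISDeviation (pref : N → Finset N → Finset N → Prop) (π π' : HPartition N) : Prop :=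
  ∃ i T, IsCoalitionOf π T ∧ T ≠ π.part i ∧ i ∉ T ∧
    SPref pref i (insert i T) (π.part i) ∧
    (∀ j ∈ T, pref j (insert i T) T) ∧
    (∀ j ∈ π.part i, j ≠ i → pref j ((π.part i).erase i) (π.part i)) ∧
    (∀ k, π'.part k = if k = i ∨ k ∈ T then insert i T else (π.part k).erase i)

/-- The weak relation associated with a (primitive) strict relation. -/
def weakOf (sp : N → Finset N → Finset N → Prop) (i : N) (S T : Finset N) : Prop :=
  ¬ sp i T S

/-- Strict part of a weak preference over players. -/
def strictP (p : N → N → N → Prop) (i j k : N) : Prop := p i j k ∧ ¬ p i k j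

/-- Player `j` is unacceptable to `i`: `i ≻ᵢ j`. -/
def unacc (p : N → N → N → Prop) (i j : N) : Prop := strictP p i i j

/-- Player `i` likes `j`: `j ≻ᵢ i`. -/
def likes (p : N → N → N → Prop) (i j : N) : Prop := strictP p i j i

/-- Each player's preference over players is a complete preorder. -/
def CompletePreorder (p : N → N → N → Prop) : Prop :=
  (∀ i j k, p i j k ∨ p i k j) ∧ (∀ i a b c, p i a b → p i b c → p i a c)

/-- The set of `≿ᵢ`-maximal elements of `J`, with `max ∅ = {i}`. -/
def maxSet (p : N → N → N → Prop) (i : N) (J : Finset N) : Set N :=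
  if J = ∅ then {i} else {m | m ∈ J ∧ ∀ j ∈ J, p i m j}

/-- The set of `≿ᵢ`-minimal elements of `J`, with `min ∅ = {i}`. -/
def minSet (p : N → N → N → Prop) (i : N) (J : Finset N) : Set N :=
  if J = ∅ then {i} else {m | m ∈ J ∧ ∀ j ∈ J, p i j m}

/-- W-hedonic (weak) preference over coalitions: compare worst members. -/
def WPref (p : N → N → N → Prop) (i : N) (S T : Finset N) : Prop :=
  ∀ s ∈ minSet p i (S.erase i), ∀ t ∈ minSet p i (T.erase i), p i s t

/-- WW-hedonic (weak) preference over coalitions. -/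
def WWPref (p : N → N → N → Prop) (i : N) (S T : Finset N) : Prop :=
  (∃ j ∈ T.erase i, unacc p i j) ∨ WPref p i S T

/-- BB-hedonic (weak) preference over coalitions. -/
def BBPref (p : N → N → N → Prop) (i : N) (S T : Finset N) : Prop :=
  (∃ j ∈ T.erase i, unacc p i j) ∨
    ((∀ j ∈ S.erase i, ¬ unacc p i j) ∧ (∀ j ∈ T.erase i, ¬ unacc p i j) ∧
      ∀ s ∈ maxSet p i (S.erase i), ∀ t ∈ maxSet p i (T.erase i), p i s t)

/-- B-hedonic strict preference over coalitions: better best member, or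
indifferent best members and smaller size. -/
def BStrict (p : N → N → N → Prop) (i : N) (S T : Finset N) : Prop :=
  (∀ s ∈ maxSet p i (S.erase i), ∀ t ∈ maxSet p i (T.erase i), strictP p i s t) ∨
    ((∀ s ∈ maxSet p i (S.erase i), ∀ t ∈ maxSet p i (T.erase i), p i s t ∧ p i t s) ∧
      S.card < T.card)

/-- B-hedonic weak preference over coalitions. -/
def BWeak (p : N → N → N → Prop) : N → Finset N → Finset N → Prop :=
  weakOf (BStrict p)

end Defs

/-- Utility encoding the gadget preferences: player `a` ranks `a+1` top, then
`a+4` (= a−1), then himself; all other gadget players are unacceptable. -/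
def uG : Fin 5 → Fin 5 → ℤ := fun a b =>
  if b = a + 1 then 3 else if b = a + 4 then 2 else if b = a then 1 else 0

/-- The induced preference over players. -/
def pG : Fin 5 → Fin 5 → Fin 5 → Prop := fun a b c => uG a c ≤ uG a b

/-!
Player `5^X` (index `4`) ranks `1^X` (index `0`) strictly above every other gadget
player, and `1^X` finds `5^X` acceptable. So whenever `1^X` is alone, `5^X` can join him: `5^X`
strictly gains (his current coalition contains only players he ranks below `1^X`),
and `1^X` weakly approves.
-/

section UtilityPreferences

variable {N α : Type*} [LinearOrder α]

def utilPref (u : N → N → α) : N → N → N → Prop := fun i b c => u i c ≤ u i b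

theorem unacc_utilPref {u : N → N → α} {i j : N} :
    unacc (utilPref u) i j ↔ u i j < u i i := by
  simp only [unacc, strictP, utilPref, not_le, and_iff_right_of_imp le_of_lt]

variable [DecidableEq N]

theorem le_of_mem_maxSet {p : N → N → N → Prop} {i k m : N} {J : Finset N}
    (hk : k ∈ J) (hm : m ∈ maxSet p i J) : p i m k := by
  rw [maxSet, if_neg (ne_empty_of_mem hk)] at hm
  exact hm.2 k hk

theorem mem_insert_of_mem_maxSet {p : N → N → N → Prop} {i m : N} {J : Finset N}
    (hm : m ∈ maxSet p i J) : m ∈ insert i J := by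
  unfold maxSet at hm
  split_ifs at hm with hJ
  · exact mem_insert.2 (Or.inl hm)
  · exact mem_insert_of_mem hm.1

theorem maxSet_utilPref_nonempty (u : N → N → α) (i : N) (J : Finset N) :
    (maxSet (utilPref u) i J).Nonempty := by
  unfold maxSet
  split_ifs with hJ
  · exact Set.singleton_nonempty i
  · obtain ⟨m, hm, hmax⟩ := exists_max_image J (u i) (nonempty_iff_ne_empty.2 hJ)
    exact ⟨m, hm, hmax⟩

theorem sPref_bbPref_utilPref_of_lt {u : N → N → α} {i k : N} {S T : Finset N}
    (hS : ∀ j ∈ S.erase i, u i i ≤ u i j) (hk : k ∈ S.erase i)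
    (hT : ∀ j ∈ insert i T, u i j < u i k) :
    SPref (BBPref (utilPref u)) i S T := by
  have best_lt : ∀ s ∈ maxSet (utilPref u) i (S.erase i),
      ∀ t ∈ maxSet (utilPref u) i (T.erase i), u i t < u i s := fun s hs t ht =>
    (hT t (insert_subset_insert i (erase_subset i T) (mem_insert_of_mem_maxSet ht))).trans_le
      (le_of_mem_maxSet hk hs)
  have S_acc : ∀ j ∈ S.erase i, ¬ unacc (utilPref u) i j := fun j hj =>
    unacc_utilPref.not.2 (hS j hj).not_gt
  refine ⟨?_, ?_⟩
  · by_cases hTu : ∃ j ∈ T.erase i, unacc (utilPref u) i j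
    · exact Or.inl hTu
    · push Not at hTu
      exact Or.inr ⟨S_acc, hTu, fun s hs t ht => (best_lt s hs t ht).le⟩
  · rintro (⟨j, hj, hju⟩ | ⟨-, -, hTS⟩)
    · exact S_acc j hj hju
    · obtain ⟨t, ht⟩ := maxSet_utilPref_nonempty u i (T.erase i)
      obtain ⟨s, hs⟩ := maxSet_utilPref_nonempty u i (S.erase i)
      exact (hTS t ht s hs).not_gt (best_lt s hs t ht)

end UtilityPreferences

theorem HPartition.notMem_part_of_part_eq_singleton {N : Type*} (π : HPartition N) {i j : N}
    (hi : π.part i = {i}) (hj : j ≠ i) : i ∉ π.part j := fun h =>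
  hj (mem_singleton.1 (hi ▸ π.eq_of_mem j i h ▸ π.mem_self j))

theorem gadget_not_is_general (π : HPartition (Fin 5))
    (h1 : π.part 0 = {0}) :
    ¬ IndStable (BBPref pG) π := by
  intro hIS
  have h0 : (0 : Fin 5) ∉ π.part 4 := π.notMem_part_of_part_eq_singleton h1 (by decide)
  have hne : ({0} : Finset (Fin 5)) ≠ π.part 4 := fun h => by
    simpa [← h] using π.mem_self 4
  have five_ranks_one_top : ∀ j : Fin 5, j ≠ 0 → uG 4 j < uG 4 0 := by decide
  have five_gains : SPref (BBPref pG) 4 (insert 4 {0}) (π.part 4) :=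
    sPref_bbPref_utilPref_of_lt (k := 0) (by decide) (by decide) fun j hj =>
      five_ranks_one_top j <| by
        rintro rfl
        exact h0 ((mem_insert.1 hj).resolve_left (by decide))
  have one_approves : BBPref pG 0 (insert 4 {0}) {0} :=
    (sPref_bbPref_utilPref_of_lt (u := uG) (k := 4) (by decide) (by decide) (by decide)).1
  exact hIS 4 {0} (Or.inr ⟨0, h1.symm⟩) hne
    ⟨five_gains, fun j hj => mem_singleton.1 hj ▸ one_approves⟩

/-- in the 5-player gadget of the BB-hedonic IS-hardness
reduction (players `0,…,4` standing for `1^X,…,5^X`), if player `1^X` is a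
singleton and each of the remaining players lies in a singleton or in one of
the pairs `{2^X,3^X}`, `{3^X,4^X}`, `{4^X,5^X}`, the partition is not
individually stable. -/
theorem gadget_not_is (π : HPartition (Fin 5))
    (h1 : π.part 0 = {0})
    (hrest : ∀ a : Fin 5, a ≠ 0 →
      π.part a = {a} ∨ π.part a = ({1, 2} : Finset (Fin 5)) ∨
        π.part a = ({2, 3} : Finset (Fin 5)) ∨ π.part a = ({3, 4} : Finset (Fin 5))) :
    ¬ IndStable (BBPref pG) π :=
  gadget_not_is_general π h1
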